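/- arXiv:1510.03828 — 2 statements merged into one kernel-verified Lean document; each statement's English description precedes it below -/
import Mathlib

section
/- Let T be a countably infinite rooted leafless directed tree, β ⊆ (0,∞), λ ⊆ (0,∞), and S_λ ∈ B(ℓ²(β)). For a path P in T (a subtree containing the root in which every vertex has exactly one child), define r₂^P(S_λ) = lim_{n→∞} inf{ (√β_v · λ_{root|v})^{1/|v|} : v ∈ P, |v| ≥ n }, and r₂⁺(S_λ) = sup over all paths P of r₂^P(S_λ). Then the open disc {z ∈ ℂ : |z| < r₂⁺(S_λ)} is contained in the point spectrum of S_λ*. -/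
open scoped ENNReal
open Filter

noncomputable section

/-- Membership in the weighted ℓ² space ℓ²(β). -/
def MemL2 {V : Type*} (β : V → ℝ) (f : V → ℂ) : Prop :=
  Summable fun v => β v * ‖f v‖ ^ 2

/-- The squared norm in ℓ²(β). -/
noncomputable def wnormSq {V : Type*} (β : V → ℝ) (f : V → ℂ) : ℝ :=
  ∑' v, β v * ‖f v‖ ^ 2

/-- The inner product of ℓ²(β). -/
noncomputable def winner {V : Type*} (β : V → ℝ) (f g : V → ℂ) : ℂ :=
  ∑' v, f v * (starRingEnd ℂ) (g v) * (β v : ℂ)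

/-- The indicator (basis) vector e_u. -/
def eVec {V : Type*} [DecidableEq V] (u : V) : V → ℂ :=
  fun v => if v = u then 1 else 0

/-- The formal weighted-shift map Λ with complex weights. -/
def shiftMap {V : Type*} [DecidableEq V] (root : V) (par : V → V) (lam : V → ℂ)
    (f : V → ℂ) : V → ℂ :=
  fun v => if v = root then 0 else lam v * f (par v)

/-- The formal weighted-shift map Λ with positive real weights. -/
def shiftMapR {V : Type*} [DecidableEq V] (root : V) (par : V → V) (lam : V → ℝ)
    (f : V → ℂ) : V → ℂ :=
  fun v => if v = root then 0 else (lam v : ℂ) * f (par v)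

/-- λ_{par^k(v)|v} : the product of the weights along the path from par^k(v) to v. -/
noncomputable def lamProd {V : Type*} (par : V → V) (lam : V → ℝ) (k : ℕ) (v : V) : ℝ :=
  ∏ j ∈ Finset.range k, lam (par^[j] v)

/-- The formal multiplication map Γ_φ̂. -/
noncomputable def gammaMap {V : Type*} (par : V → V) (depth : V → ℕ) (lam : V → ℝ)
    (φ : ℕ → ℂ) (f : V → ℂ) : V → ℂ :=
  fun v => ∑ k ∈ Finset.range (depth v + 1),
    ((lamProd par lam k v : ℝ) : ℂ) * φ k * f (par^[k] v)

/-- φ̂ is a multiplier: the multiplication operator M_φ̂ is everywhere defined on ℓ²(β). -/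
def Mult {V : Type*} (par : V → V) (depth : V → ℕ) (β lam : V → ℝ) (φ : ℕ → ℂ) : Prop :=
  ∀ f : V → ℂ, MemL2 β f → MemL2 β (gammaMap par depth lam φ f)

/-- The operator norm (w.r.t. ℓ²(β)) of a formal map T. -/
noncomputable def opNorm {V : Type*} (β : V → ℝ) (T : (V → ℂ) → (V → ℂ)) : ℝ :=
  sInf {C : ℝ | 0 ≤ C ∧ ∀ f : V → ℂ, MemL2 β f →
    wnormSq β (T f) ≤ C ^ 2 * wnormSq β f}

/-- Cauchy product of symbols. -/
def cauchyMul (φ ψ : ℕ → ℂ) : ℕ → ℂ :=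
  fun k => ∑ j ∈ Finset.range (k + 1), φ j * ψ (k - j)

/-- The spectral radius of the weighted shift, via the Gelfand formula. -/
noncomputable def specRad {V : Type*} [DecidableEq V] (root : V) (par : V → V)
    (β lam : V → ℝ) : ℝ :=
  ⨅ n : ℕ, (opNorm β (fun f => (shiftMapR root par lam)^[n + 1] f)) ^ ((1 : ℝ) / ((n : ℝ) + 1))

/-- The explicit formula for the adjoint S_λ^* of the weighted shift. -/
noncomputable def SStar {V : Type*} [DecidableEq V] (root : V) (par : V → V)
    (β lam : V → ℝ) (g : V → ℂ) : V → ℂ :=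
  fun u => ∑' v : {v : V // v ≠ root ∧ par v = u}, ((lam v.1 * (β v.1 / β u) : ℝ) : ℂ) * g v.1

/-- p : ℕ → V enumerates a path of the directed tree. -/
def IsPath {V : Type*} (root : V) (par : V → V) (p : ℕ → V) : Prop :=
  p 0 = root ∧ ∀ k, par (p (k + 1)) = p k ∧ p (k + 1) ≠ root

/-- r₂^P(S_λ) for a path p. -/
noncomputable def r2P {V : Type*} (β lam : V → ℝ) (p : ℕ → V) : ℝ :=
  Filter.liminf
    (fun k : ℕ => (Real.sqrt (β (p k)) * ∏ j ∈ Finset.range k, lam (p (j + 1))) ^ ((1 : ℝ) / (k : ℝ)))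
    Filter.atTop

/-- r₂⁺(S_λ) : the supremum of r₂^P(S_λ) over all paths. -/
noncomputable def r2plus {V : Type*} (root : V) (par : V → V) (β lam : V → ℝ) : ℝ :=
  sSup {r : ℝ | ∃ p : ℕ → V, IsPath root par p ∧ r = r2P β lam p}

/-- the open disc of radius r₂⁺(S_λ) is contained in σ_p(S_λ*). -/
theorem stmt17 {V : Type*} [Countable V] [Infinite V] [DecidableEq V]
    (root : V) (par : V → V) (depth : V → ℕ)
    (hdepth0 : depth root = 0)
    (hdepth : ∀ v, v ≠ root → depth v = depth (par v) + 1)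
    (hreach : ∀ v, par^[depth v] v = root)
    (hleafless : ∀ u : V, ∃ v : V, v ≠ root ∧ par v = u)
    (β : V → ℝ) (hβ : ∀ v, 0 < β v)
    (lam : V → ℝ) (hlam : ∀ v, v ≠ root → 0 < lam v)
    (hbdd : ∃ C : ℝ, ∀ f : V → ℂ, MemL2 β f →
        MemL2 β (shiftMapR root par lam f) ∧
        wnormSq β (shiftMapR root par lam f) ≤ C * wnormSq β f)
    (w : ℂ) (hw : ‖w‖ < r2plus root par β lam) :
    ∃ g : V → ℂ, g ≠ 0 ∧ MemL2 β g ∧ SStar root par β lam g = w • g := by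
  classical
  have hw0 : (0:ℝ) ≤ ‖w‖ := norm_nonneg w
  -- Step 1: extract a path p with ‖w‖ < r2P β lam p
  obtain ⟨p, hpath, hwrP⟩ :
      ∃ p : ℕ → V, IsPath root par p ∧ ‖w‖ < r2P β lam p := by
    have hw' : ‖w‖ < sSup {r : ℝ | ∃ p : ℕ → V, IsPath root par p ∧ r = r2P β lam p} := hw
    have hSne : {r : ℝ | ∃ p : ℕ → V, IsPath root par p ∧ r = r2P β lam p}.Nonempty := by
      by_contra h
      rw [Set.not_nonempty_iff_eq_empty] at h
      rw [h, Real.sSup_empty] at hw'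
      linarith
    obtain ⟨r, hrS, hr⟩ := exists_lt_of_lt_csSup hSne hw'
    obtain ⟨p, hp, rfl⟩ := hrS
    exact ⟨p, hp, hr⟩
  obtain ⟨hp0, hpsucc⟩ := hpath
  have hppar : ∀ k, par (p (k+1)) = p k := fun k => (hpsucc k).1
  have hpnr : ∀ k, p (k+1) ≠ root := fun k => (hpsucc k).2
  have hdp : ∀ k, depth (p k) = k := by
    intro k; induction k with
    | zero => rw [hp0, hdepth0]
    | succ n ih => rw [hdepth _ (hpnr n), hppar n, ih]
  have hpinj : Function.Injective p := by
    intro a b h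
    have h2 : depth (p a) = depth (p b) := by rw [h]
    rwa [hdp, hdp] at h2
  have hlamp : ∀ k, 0 < lam (p (k+1)) := fun k => hlam _ (hpnr k)
  set L : ℕ → ℝ := fun k => ∏ j ∈ Finset.range k, lam (p (j+1)) with hLdef
  have hLpos : ∀ k, 0 < L k := fun k => Finset.prod_pos fun j _ => hlamp j
  set c : ℕ → ℂ := fun k => w ^ k / ((β (p k) * L k : ℝ) : ℂ) with hcdef
  set g : V → ℂ := fun v => if v = p (depth v) then c (depth v) else 0 with hgdef
  have hgp : ∀ k, g (p k) = c k := by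
    intro k
    simp [hgdef, hdp k]
  have hgoff : ∀ v, v ≠ p (depth v) → g v = 0 := by
    intro v h; simp only [hgdef, if_neg h]
  -- choose r strictly between ‖w‖ and r2P
  set r : ℝ := (‖w‖ + r2P β lam p) / 2 with hrdef
  have hwr1 : ‖w‖ < r := by rw [hrdef]; linarith
  have hr2 : r < r2P β lam p := by rw [hrdef]; linarith
  have hrpos : 0 < r := lt_of_le_of_lt hw0 hwr1
  -- eventual lower bound from the liminf
  have hev : ∀ᶠ k in Filter.atTop,
      r < (Real.sqrt (β (p k)) * ∏ j ∈ Finset.range k, lam (p (j+1))) ^ ((1:ℝ)/(k:ℝ)) := by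
    refine Filter.eventually_lt_of_lt_liminf ?_ ?_
    · exact hr2
    · refine Filter.isBoundedUnder_of ⟨0, fun k => Real.rpow_nonneg ?_ _⟩
      exact mul_nonneg (Real.sqrt_nonneg _) (Finset.prod_nonneg fun j _ => (hlamp j).le)
  obtain ⟨N, hN⟩ := Filter.eventually_atTop.mp hev
  set q : ℝ := (‖w‖ / r) ^ 2 with hqdef
  have hq0 : 0 ≤ q := sq_nonneg _
  have hq1 : q < 1 := by
    have h1 : ‖w‖ / r < 1 := (div_lt_one hrpos).mpr hwr1
    have h0 : 0 ≤ ‖w‖ / r := div_nonneg hw0 hrpos.le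
    calc q = (‖w‖/r)^2 := hqdef
      _ < 1 := pow_lt_one₀ h0 h1 two_ne_zero
  set M : ℕ := max N 1 with hMdef
  have key : ∀ k, M ≤ k → β (p k) * ‖c k‖ ^ 2 ≤ q ^ k := by
    intro k hk
    have hk1 : 1 ≤ k := le_trans (le_max_right N 1) hk
    have hkN : N ≤ k := le_trans (le_max_left N 1) hk
    have hB : 0 < β (p k) := hβ _
    have hLk : 0 < L k := hLpos k
    have ht : 0 < Real.sqrt (β (p k)) * L k := mul_pos (Real.sqrt_pos.mpr hB) hLk
    have hx : r < (Real.sqrt (β (p k)) * L k) ^ ((1:ℝ)/(k:ℝ)) := hN k hkN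
    have hk0 : (k:ℝ) ≠ 0 := by
      have : (0:ℝ) < (k:ℝ) := by exact_mod_cast hk1
      exact this.ne'
    have hrk : r ^ k < Real.sqrt (β (p k)) * L k := by
      have h1 : r ^ ((k:ℕ):ℝ) < ((Real.sqrt (β (p k)) * L k) ^ ((1:ℝ)/(k:ℝ))) ^ ((k:ℕ):ℝ) :=
        Real.rpow_lt_rpow hrpos.le hx (by exact_mod_cast hk1)
      rw [Real.rpow_natCast, ← Real.rpow_mul ht.le, one_div, inv_mul_cancel₀ hk0,
        Real.rpow_one] at h1
      exact h1
    have hck : ‖c k‖ = ‖w‖ ^ k / (β (p k) * L k) := by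
      simp only [hcdef, norm_div, norm_pow, Complex.norm_real]
      rw [Real.norm_of_nonneg (mul_pos hB hLk).le]
    have e1 : β (p k) * ‖c k‖ ^ 2 = (‖w‖ ^ k / (Real.sqrt (β (p k)) * L k)) ^ 2 := by
      rw [hck]
      have hs : Real.sqrt (β (p k)) ^ 2 = β (p k) := Real.sq_sqrt hB.le
      have hs0 : Real.sqrt (β (p k)) ≠ 0 := (Real.sqrt_pos.mpr hB).ne'
      field_simp
      rw [hs]
      ring
    have e2 : ‖w‖ ^ k / (Real.sqrt (β (p k)) * L k) ≤ ‖w‖ ^ k / r ^ k :=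
      div_le_div_of_nonneg_left (pow_nonneg hw0 k) (pow_pos hrpos k) hrk.le
    calc β (p k) * ‖c k‖ ^ 2 = (‖w‖ ^ k / (Real.sqrt (β (p k)) * L k)) ^ 2 := e1
      _ ≤ (‖w‖ ^ k / r ^ k) ^ 2 :=
          pow_le_pow_left₀ (div_nonneg (pow_nonneg hw0 k) ht.le) e2 2
      _ = q ^ k := by rw [hqdef, ← div_pow]; ring
  -- membership in ℓ²(β)
  have hsum : Summable (fun k : ℕ => β (p k) * ‖c k‖ ^ 2) := by
    rw [← summable_nat_add_iff M]
    have hgeo : Summable (fun n : ℕ => q ^ (n + M)) := by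
      simpa [pow_add] using (summable_geometric_of_lt_one hq0 hq1).mul_right (q ^ M)
    exact Summable.of_nonneg_of_le
      (fun n => mul_nonneg (hβ _).le (sq_nonneg _))
      (fun n => key (n + M) (Nat.le_add_left M n)) hgeo
  have hmem : MemL2 β g := by
    have hoff : ∀ v ∉ Set.range p, β v * ‖g v‖ ^ 2 = 0 := by
      intro v hv
      have hg0 : g v = 0 := hgoff v (fun h => hv ⟨depth v, h.symm⟩)
      rw [hg0]; simp
    exact (hpinj.summable_iff hoff).mp (by simpa [Function.comp_def, hgp] using hsum)
  -- g ≠ 0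
  have hc0 : c 0 ≠ 0 := by
    have h1 : c 0 = 1 / ((β (p 0) : ℝ) : ℂ) := by
      simp [hcdef, hLdef]
    rw [h1]
    exact one_div_ne_zero (by exact_mod_cast (hβ (p 0)).ne')
  have hgne : g ≠ 0 := by
    intro h
    apply hc0
    have h2 : g (p 0) = 0 := by rw [h]; rfl
    rwa [hgp 0] at h2
  -- key structural fact about children carrying mass
  have hchild : ∀ v : V, v ≠ root → g v ≠ 0 →
      v = p (depth (par v) + 1) ∧ par v = p (depth (par v)) := by
    intro v hv hg
    have hvp : v = p (depth v) := by
      by_contra h; exact hg (hgoff v h)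
    have hd0 : depth v ≠ 0 := by
      intro h0
      exact hv (by rw [hvp, h0, hp0])
    obtain ⟨j, hj⟩ := Nat.exists_eq_succ_of_ne_zero hd0
    have hv' : v = p (j+1) := by rw [hvp, hj]
    have hpar : par v = p j := by rw [hv', hppar]
    have hdj : depth (par v) = j := by rw [hpar, hdp]
    exact ⟨by rw [hdj]; exact hv', by rw [hdj]; exact hpar⟩
  -- the eigenvalue equation
  have heig : SStar root par β lam g = w • g := by
    funext u
    have hsmul : (w • g) u = w * g u := rfl
    rw [hsmul]
    show (∑' v : {v : V // v ≠ root ∧ par v = u},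
        ((lam v.1 * (β v.1 / β u) : ℝ) : ℂ) * g v.1) = w * g u
    by_cases hu : u = p (depth u)
    · set k : ℕ := depth u with hk
      have ha1 : p (k+1) ≠ root := hpnr k
      have ha2 : par (p (k+1)) = u := by rw [hppar]; exact hu.symm
      have huniq : ∀ b : {v : V // v ≠ root ∧ par v = u},
          b ≠ (⟨p (k+1), ha1, ha2⟩ : {v : V // v ≠ root ∧ par v = u}) →
          ((lam b.1 * (β b.1 / β u) : ℝ) : ℂ) * g b.1 = 0 := by
        intro b hb
        rcases eq_or_ne (g b.1) 0 with h0 | h0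
        · rw [h0, mul_zero]
        · exfalso
          obtain ⟨hb1, _⟩ := hchild b.1 b.2.1 h0
          apply hb
          apply Subtype.ext
          rw [hb1, b.2.2, ← hk]
      rw [tsum_eq_single (⟨p (k+1), ha1, ha2⟩ : {v : V // v ≠ root ∧ par v = u}) huniq]
      simp only
      rw [hgp (k+1), hu, hgp k]
      have hB1 : ((β (p k) : ℝ) : ℂ) ≠ 0 := by exact_mod_cast (hβ (p k)).ne'
      have hB2 : ((β (p (k+1)) : ℝ) : ℂ) ≠ 0 := by exact_mod_cast (hβ (p (k+1))).ne'
      have hL1 : ((L k : ℝ) : ℂ) ≠ 0 := by exact_mod_cast (hLpos k).ne'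
      have hlam1 : ((lam (p (k+1)) : ℝ) : ℂ) ≠ 0 := by exact_mod_cast (hlamp k).ne'
      have hLs : L (k+1) = L k * lam (p (k+1)) := Finset.prod_range_succ _ _
      simp only [hcdef]
      rw [hLs, pow_succ]
      push_cast
      field_simp
    · have h0 : ∀ v : {v : V // v ≠ root ∧ par v = u},
          ((lam v.1 * (β v.1 / β u) : ℝ) : ℂ) * g v.1 = 0 := by
        intro v
        rcases eq_or_ne (g v.1) 0 with h | h
        · rw [h, mul_zero]
        · exfalso
          obtain ⟨_, hb2⟩ := hchild v.1 v.2.1 h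
          apply hu
          rw [← v.2.2]
          exact hb2
      rw [tsum_congr h0, tsum_zero, hgoff u hu, mul_zero]
  exact ⟨g, hgne, hmem, heig⟩

end
end

section
/- Let T = (V,E) be a countably infinite rooted leafless directed tree, μ = {μ_v}_{v∈V°} a family of nonzero complex numbers, and λ = {λ_v}_{v∈V°} ⊆ (0,∞). Define β_v = |μ_{root|v} / λ_{root|v}|² where μ_{root|v} (resp. λ_{root|v}) is the product of the μ-weights (resp. λ-weights) along the path from the root to v. Then the map U : ℓ²(V,1) → ℓ²(V,β), (Uf)(u) = (λ_{root|u}/μ_{root|u}) f(u), is a unitary isomorphism, and U S_μ = S_λ U as unbounded operators, where S_μ is the weighted shift on the unweighted tree and S_λ the weighted shift on the weighted tree T_β. -/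
open scoped ENNReal
open Filter

noncomputable section

/-- with β_v = |μ_{root|v}/λ_{root|v}|², the map
(Uf)(u) = (λ_{root|u}/μ_{root|u}) f(u) is a unitary isomorphism from ℓ²(V,1) onto
ℓ²(V,β) and U S_μ = S_λ U as unbounded operators (same action and equal domains). -/
theorem stmt19 {V : Type*} [Countable V] [Infinite V] [DecidableEq V]
    (root : V) (par : V → V) (depth : V → ℕ)
    (hdepth0 : depth root = 0)
    (hdepth : ∀ v, v ≠ root → depth v = depth (par v) + 1)
    (hreach : ∀ v, par^[depth v] v = root)
    (hleafless : ∀ u : V, ∃ v : V, v ≠ root ∧ par v = u)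
    (mu : V → ℂ) (hmu : ∀ v, v ≠ root → mu v ≠ 0)
    (lam : V → ℝ) (hlam : ∀ v, v ≠ root → 0 < lam v)
    -- the products μ_{root|v} and λ_{root|v} along the path from the root to v
    (muProd lamProdC : V → ℂ)
    (hmuProd : ∀ v, muProd v = ∏ j ∈ Finset.range (depth v), mu (par^[j] v))
    (hlamProd : ∀ v, lamProdC v = ∏ j ∈ Finset.range (depth v), (lam (par^[j] v) : ℂ))
    (β : V → ℝ) (hβ : ∀ v, β v = ‖muProd v / lamProdC v‖ ^ 2)
    (U : (V → ℂ) → (V → ℂ))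
    (hU : ∀ f u, U f u = (lamProdC u / muProd u) * f u) :
    -- U maps ℓ²(V,1) into ℓ²(V,β) isometrically
    (∀ f : V → ℂ,
        (MemL2 (fun _ => (1 : ℝ)) f ↔ MemL2 β (U f)) ∧
        wnormSq β (U f) = wnormSq (fun _ => (1 : ℝ)) f)
    -- U is surjective onto ℓ²(V,β)
    ∧ (∀ g : V → ℂ, MemL2 β g → ∃ f : V → ℂ, MemL2 (fun _ => (1 : ℝ)) f ∧ U f = g)
    -- U S_μ = S_λ U : same action ...
    ∧ (∀ f : V → ℂ, U (shiftMap root par mu f) = shiftMapR root par lam (U f))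
    -- ... and equal domains
    ∧ (∀ f : V → ℂ, MemL2 (fun _ => (1 : ℝ)) f →
        (MemL2 (fun _ => (1 : ℝ)) (shiftMap root par mu f)
          ↔ MemL2 β (shiftMapR root par lam (U f)))) := by

  -- `par^[j] v ≠ root` for `j < depth v`
  have hne : ∀ j, ∀ v : V, j < depth v → par^[j] v ≠ root := by
    intro j
    induction j with
    | zero =>
      intro v hj h
      simp only [Function.iterate_zero, id_eq] at h
      rw [h, hdepth0] at hj; exact Nat.lt_irrefl 0 hj
    | succ j ih =>
      intro v hj
      have hv : v ≠ root := by
        intro h; rw [h, hdepth0] at hj; exact Nat.not_succ_le_zero _ hj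
      rw [Function.iterate_succ_apply]
      exact ih (par v) (by have := hdepth v hv; omega)
  have hmuP0 : ∀ v, muProd v ≠ 0 := by
    intro v; rw [hmuProd]
    exact Finset.prod_ne_zero_iff.mpr
      (fun j hj => hmu _ (hne j v (Finset.mem_range.mp hj)))
  have hlamP0 : ∀ v, lamProdC v ≠ 0 := by
    intro v; rw [hlamProd]
    exact Finset.prod_ne_zero_iff.mpr
      (fun j hj => Complex.ofReal_ne_zero.mpr
        (ne_of_gt (hlam _ (hne j v (Finset.mem_range.mp hj)))))
  have h1 : ∀ v, muProd v / lamProdC v * (lamProdC v / muProd v) = 1 := by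
    intro v
    rw [div_mul_div_comm, mul_comm (muProd v) (lamProdC v),
      div_self (mul_ne_zero (hlamP0 v) (hmuP0 v))]
  have h1' : ∀ v, lamProdC v / muProd v * (muProd v / lamProdC v) = 1 := by
    intro v
    rw [div_mul_div_comm, mul_comm (lamProdC v) (muProd v),
      div_self (mul_ne_zero (hmuP0 v) (hlamP0 v))]
  -- key pointwise norm identity
  have key : ∀ (c : ℂ) (v : V), β v * ‖lamProdC v / muProd v * c‖ ^ 2 = ‖c‖ ^ 2 := by
    intro c v
    rw [hβ, norm_mul, mul_pow, ← mul_assoc, ← mul_pow, ← norm_mul, h1, norm_one,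
      one_pow, one_mul]
  -- recursion for products
  have hmuRec : ∀ v, v ≠ root → muProd v = muProd (par v) * mu v := by
    intro v hv
    rw [hmuProd v, hmuProd (par v), hdepth v hv, Finset.prod_range_succ']
    simp only [Function.iterate_succ_apply, Function.iterate_zero, id_eq]
  have hlamRec : ∀ v, v ≠ root → lamProdC v = lamProdC (par v) * (lam v : ℂ) := by
    intro v hv
    rw [hlamProd v, hlamProd (par v), hdepth v hv, Finset.prod_range_succ']
    simp only [Function.iterate_succ_apply, Function.iterate_zero, id_eq]
  have hrec : ∀ v, v ≠ root →
      lamProdC v / muProd v * mu v = (lam v : ℂ) * (lamProdC (par v) / muProd (par v)) := by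
    intro v hv
    rw [hmuRec v hv, hlamRec v hv]
    field_simp
    rw [mul_div_mul_right _ _ (hmu v hv)]
  -- part 1
  have part1 : ∀ f : V → ℂ,
      (MemL2 (fun _ => (1 : ℝ)) f ↔ MemL2 β (U f)) ∧
      wnormSq β (U f) = wnormSq (fun _ => (1 : ℝ)) f := by
    intro f
    have hpt : ∀ v, β v * ‖U f v‖ ^ 2 = (1 : ℝ) * ‖f v‖ ^ 2 := by
      intro v; rw [hU, key, one_mul]
    constructor
    · exact (summable_congr hpt).symm
    · exact tsum_congr hpt
  refine ⟨part1, ?_, ?_, ?_⟩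
  · -- surjectivity
    intro g hg
    refine ⟨fun v => muProd v / lamProdC v * g v, ?_, ?_⟩
    · have hpt : ∀ v, (1 : ℝ) * ‖muProd v / lamProdC v * g v‖ ^ 2 = β v * ‖g v‖ ^ 2 := by
        intro v
        rw [one_mul, hβ, norm_mul, mul_pow]
      exact (summable_congr hpt).mpr hg
    · funext v
      rw [hU, ← mul_assoc, h1' v, one_mul]
  · -- intertwining
    intro f
    funext v
    by_cases hv : v = root
    · simp [hU, shiftMap, shiftMapR, hv]
    · simp only [hU, shiftMap, shiftMapR, if_neg hv]
      rw [← mul_assoc, hrec v hv]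
      ring
  · -- equal domains
    intro f _
    have hA : ∀ g : V → ℂ, U (shiftMap root par mu g) = shiftMapR root par lam (U g) := by
      intro g
      funext v
      by_cases hv : v = root
      · simp [hU, shiftMap, shiftMapR, hv]
      · simp only [hU, shiftMap, shiftMapR, if_neg hv]
        rw [← mul_assoc, hrec v hv]
        ring
    rw [← hA f]
    exact (part1 (shiftMap root par mu f)).1
end
end
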